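/- For a solution ω̃₁ of the dynamic rescaling formulation of the 3D axisymmetric Euler equations with no swirl, the normалization conditions ∂_τ ω̃₁(0,1,τ) = 0 and ∂_τ ∂_ζω̃₁(0,1,τ) = 0 (together with ω̃₁(0,1,τ) ≠ 0, ∂_ζω̃₁(0,1,τ)=0, and ∂_ζζω̃₁(0,1,τ) ≠ 0) are equivalent to the choice c̃_ω(τ) = (1-α) ∂_ζψ̃₁(0,1,τ) and c̃_l(τ) = -2ψ̃₁(0,1,τ) - (1-α) ∂_ζζψ̃₁(0,1,τ) · ω̃₁(0,1,τ)/∂_ζζω̃₁(0,1,τ). -/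

import Mathlib

private lemma line2' {G : ℝ × ℝ × ℝ → ℝ} (hG : Differentiable ℝ G) (a b c : ℝ) :
    HasDerivAt (fun z => G (a, z, c)) (fderiv ℝ G (a, b, c) (0, 1, 0)) b := by
  have h : HasDerivAt (fun z : ℝ => ((a : ℝ), z, c)) ((0 : ℝ), (1 : ℝ), (0 : ℝ)) b :=
    (hasDerivAt_const b a).prodMk ((hasDerivAt_id b).prodMk (hasDerivAt_const b c))
  exact (hG (a, b, c)).hasFDerivAt.comp_hasDerivAt b h

private lemma line3' {G : ℝ × ℝ × ℝ → ℝ} (hG : Differentiable ℝ G) (a b c : ℝ) :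
    HasDerivAt (fun s => G (a, b, s)) (fderiv ℝ G (a, b, c) (0, 0, 1)) c := by
  have h : HasDerivAt (fun s : ℝ => ((a : ℝ), b, s)) ((0 : ℝ), (0 : ℝ), (1 : ℝ)) c :=
    (hasDerivAt_const c a).prodMk ((hasDerivAt_const c b).prodMk (hasDerivAt_id c))
  exact (hG (a, b, c)).hasFDerivAt.comp_hasDerivAt c h

private lemma dapp {G : ℝ × ℝ × ℝ → ℝ} (hG : ContDiff ℝ (⊤ : ℕ∞) G) (v : ℝ × ℝ × ℝ) :
    ContDiff ℝ (⊤ : ℕ∞) (fun p => fderiv ℝ G p v) :=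
  (hG.fderiv_right (m := (⊤ : ℕ∞)) (by simp)).clm_apply contDiff_const

theorem stmt5 (α : ℝ) (hα : α ∈ Set.Ico (0:ℝ) 1)
    (cl cω : ℝ → ℝ) (ωt ψt : ℝ → ℝ → ℝ → ℝ)
    (hωs : ContDiff ℝ (⊤ : ℕ∞) fun p : ℝ × ℝ × ℝ => ωt p.1 p.2.1 p.2.2)
    (hψs : ContDiff ℝ (⊤ : ℕ∞) fun p : ℝ × ℝ × ℝ => ψt p.1 p.2.1 p.2.2)
    (heq : ∀ ξ ζ τ : ℝ, 0 ≤ ξ →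
      deriv (fun s => ωt ξ ζ s) τ
        + (cl τ * ξ + (-(ξ * deriv (fun z => ψt ξ z τ) ζ))) * deriv (fun x => ωt x ζ τ) ξ
        + (cl τ * ζ + (2 * ψt ξ ζ τ + ξ * deriv (fun x => ψt x ζ τ) ξ))
            * deriv (fun z => ωt ξ z τ) ζ
        = (cω τ - (1 - α) * deriv (fun z => ψt ξ z τ) ζ) * ωt ξ ζ τ)
    (hnz : ∀ τ : ℝ, ωt 0 1 τ ≠ 0)
    (hz1 : ∀ τ : ℝ, deriv (fun z => ωt 0 z τ) 1 = 0)
    (hzz : ∀ τ : ℝ, deriv (fun z => deriv (fun z' => ωt 0 z' τ) z) 1 ≠ 0) :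
    ∀ τ : ℝ,
      (deriv (fun s => ωt 0 1 s) τ = 0
        ∧ deriv (fun s => deriv (fun z => ωt 0 z s) 1) τ = 0)
      ↔ (cω τ = (1 - α) * deriv (fun z => ψt 0 z τ) 1
        ∧ cl τ = -2 * ψt 0 1 τ
            - (1 - α) * deriv (fun z => deriv (fun z' => ψt 0 z' τ) z) 1
                * (ωt 0 1 τ / deriv (fun z => deriv (fun z' => ωt 0 z' τ) z) 1)) := by
  intro τ
  set F : ℝ × ℝ × ℝ → ℝ := fun p => ωt p.1 p.2.1 p.2.2 with hFdef
  set Ψ : ℝ × ℝ × ℝ → ℝ := fun p => ψt p.1 p.2.1 p.2.2 with hΨdef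
  have hF : ContDiff ℝ (⊤ : ℕ∞) F := hωs
  have hΨ : ContDiff ℝ (⊤ : ℕ∞) Ψ := hψs
  have hFd : Differentiable ℝ F := hF.differentiable (by simp)
  have hΨd : Differentiable ℝ Ψ := hΨ.differentiable (by simp)
  set e2 : ℝ × ℝ × ℝ := (0, 1, 0) with he2
  set e3 : ℝ × ℝ × ℝ := (0, 0, 1) with he3
  set D2F : ℝ × ℝ × ℝ → ℝ := fun p => fderiv ℝ F p e2 with hD2Fdef
  set D2Ψ : ℝ × ℝ × ℝ → ℝ := fun p => fderiv ℝ Ψ p e2 with hD2Ψdef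
  set D3F : ℝ × ℝ × ℝ → ℝ := fun p => fderiv ℝ F p e3 with hD3Fdef
  have hD2F : ContDiff ℝ (⊤ : ℕ∞) D2F := dapp hF e2
  have hD2Ψ : ContDiff ℝ (⊤ : ℕ∞) D2Ψ := dapp hΨ e2
  have hD3F : ContDiff ℝ (⊤ : ℕ∞) D3F := dapp hF e3
  have hD2Fd : Differentiable ℝ D2F := hD2F.differentiable (by simp)
  have hD2Ψd : Differentiable ℝ D2Ψ := hD2Ψ.differentiable (by simp)
  have hD3Fd : Differentiable ℝ D3F := hD3F.differentiable (by simp)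
  -- conversions between curried derivatives and fderiv applications
  have ha : ∀ b c : ℝ, deriv (fun z => ωt 0 z c) b = D2F (0, b, c) := fun b c =>
    (line2' hFd 0 b c).deriv
  have haψ : ∀ b c : ℝ, deriv (fun z => ψt 0 z c) b = D2Ψ (0, b, c) := fun b c =>
    (line2' hΨd 0 b c).deriv
  have hb : ∀ b c : ℝ, deriv (fun s => ωt 0 b s) c = D3F (0, b, c) := fun b c =>
    (line3' hFd 0 b c).deriv
  have hc : deriv (fun z => deriv (fun z' => ωt 0 z' τ) z) 1 = fderiv ℝ D2F (0, 1, τ) e2 := by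
    have : (fun z => deriv (fun z' => ωt 0 z' τ) z) = fun z => D2F (0, z, τ) := by
      funext z; exact ha z τ
    rw [this]
    exact (line2' hD2Fd 0 1 τ).deriv
  have hcψ : deriv (fun z => deriv (fun z' => ψt 0 z' τ) z) 1 = fderiv ℝ D2Ψ (0, 1, τ) e2 := by
    have : (fun z => deriv (fun z' => ψt 0 z' τ) z) = fun z => D2Ψ (0, z, τ) := by
      funext z; exact haψ z τ
    rw [this]
    exact (line2' hD2Ψd 0 1 τ).deriv
  -- D2F vanishes along the line (0,1,s)
  have hz : ∀ s : ℝ, D2F (0, 1, s) = 0 := fun s => (ha 1 s).symm.trans (hz1 s)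
  -- trivial second normalization
  have htriv : deriv (fun s => deriv (fun z => ωt 0 z s) 1) τ = 0 := by
    have : (fun s => deriv (fun z => ωt 0 z s) 1) = fun _ : ℝ => (0 : ℝ) := by
      funext s; exact hz1 s
    rw [this, deriv_const]
  -- the PDE restricted to ξ = 0, in fderiv form
  have key : ∀ z : ℝ,
      D3F (0, z, τ) + (cl τ * z + 2 * Ψ (0, z, τ)) * D2F (0, z, τ)
        - (cω τ - (1 - α) * D2Ψ (0, z, τ)) * F (0, z, τ) = 0 := by
    intro z
    have h0 := heq 0 z τ le_rfl
    rw [ha z τ, haψ z τ, hb z τ] at h0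
    have hF0 : ωt 0 z τ = F (0, z, τ) := rfl
    have hΨ0 : ψt 0 z τ = Ψ (0, z, τ) := rfl
    rw [hF0, hΨ0] at h0
    linear_combination h0
  -- mixed partial derivative vanishes (Clairaut + hz1)
  have hmix : fderiv ℝ D3F (0, 1, τ) e2 = 0 := by
    have hsym : fderiv ℝ (fderiv ℝ F) (0, 1, τ) e2 e3
        = fderiv ℝ (fderiv ℝ F) (0, 1, τ) e3 e2 :=
      second_derivative_symmetric (fun y => (hFd y).hasFDerivAt)
        (((hF.fderiv_right (m := (⊤ : ℕ∞)) (by simp)).differentiable (by simp)) (0, 1, τ)).hasFDerivAt e2 e3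
    have hdF' : DifferentiableAt ℝ (fderiv ℝ F) (0, 1, τ) :=
      ((hF.fderiv_right (m := (⊤ : ℕ∞)) (by simp)).differentiable (by simp)) (0, 1, τ)
    have h1 : fderiv ℝ D3F (0, 1, τ) e2 = fderiv ℝ (fderiv ℝ F) (0, 1, τ) e2 e3 := by
      rw [hD3Fdef]
      rw [fderiv_clm_apply hdF' (differentiableAt_const e3)]
      simp
    have h2 : fderiv ℝ D2F (0, 1, τ) e3 = fderiv ℝ (fderiv ℝ F) (0, 1, τ) e3 e2 := by
      rw [hD2Fdef]
      rw [fderiv_clm_apply hdF' (differentiableAt_const e2)]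
      simp
    have h3 : fderiv ℝ D2F (0, 1, τ) e3 = 0 := by
      have hline := line3' hD2Fd 0 1 τ
      have : (fun s => D2F (0, 1, s)) = fun _ : ℝ => (0 : ℝ) := funext hz
      rw [this] at hline
      exact hline.unique (hasDerivAt_const τ 0)
    rw [h1, hsym, ← h2, h3]
  -- differentiate the restricted PDE in ζ at ζ = 1
  have hderiv0 :
      fderiv ℝ D3F (0, 1, τ) e2
        + ((cl τ * 1 + 2 * D2Ψ (0, 1, τ)) * D2F (0, 1, τ)
            + (cl τ * 1 + 2 * Ψ (0, 1, τ)) * fderiv ℝ D2F (0, 1, τ) e2)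
        - ((0 - (1 - α) * fderiv ℝ D2Ψ (0, 1, τ) e2) * F (0, 1, τ)
            + (cω τ - (1 - α) * D2Ψ (0, 1, τ)) * D2F (0, 1, τ)) = 0 := by
    have hA : HasDerivAt (fun z => D3F (0, z, τ)) (fderiv ℝ D3F (0, 1, τ) e2) 1 :=
      line2' hD3Fd 0 1 τ
    have hB : HasDerivAt (fun z : ℝ => cl τ * z + 2 * Ψ (0, z, τ))
        (cl τ * 1 + 2 * D2Ψ (0, 1, τ)) 1 := by
      have h1 : HasDerivAt (fun z : ℝ => cl τ * z) (cl τ * 1) 1 :=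
        (hasDerivAt_id 1).const_mul (cl τ)
      have h2 : HasDerivAt (fun z => 2 * Ψ (0, z, τ)) (2 * D2Ψ (0, 1, τ)) 1 := by
        have := (line2' hΨd 0 1 τ).const_mul (2 : ℝ)
        exact this
      exact h1.add h2
    have hC : HasDerivAt (fun z => D2F (0, z, τ)) (fderiv ℝ D2F (0, 1, τ) e2) 1 :=
      line2' hD2Fd 0 1 τ
    have hD : HasDerivAt (fun z : ℝ => cω τ - (1 - α) * D2Ψ (0, z, τ))
        (0 - (1 - α) * fderiv ℝ D2Ψ (0, 1, τ) e2) 1 :=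
      (hasDerivAt_const 1 (cω τ)).sub ((line2' hD2Ψd 0 1 τ).const_mul (1 - α))
    have hE : HasDerivAt (fun z => F (0, z, τ)) (D2F (0, 1, τ)) 1 := line2' hFd 0 1 τ
    have hbig : HasDerivAt (fun z : ℝ =>
        D3F (0, z, τ) + (cl τ * z + 2 * Ψ (0, z, τ)) * D2F (0, z, τ)
          - (cω τ - (1 - α) * D2Ψ (0, z, τ)) * F (0, z, τ)) _ 1 :=
      (hA.add (hB.mul hC)).sub (hD.mul hE)
    have hzero : (fun z : ℝ =>
        D3F (0, z, τ) + (cl τ * z + 2 * Ψ (0, z, τ)) * D2F (0, z, τ)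
          - (cω τ - (1 - α) * D2Ψ (0, z, τ)) * F (0, z, τ)) = fun _ : ℝ => (0 : ℝ) :=
      funext key
    rw [hzero] at hbig
    have := hbig.unique (hasDerivAt_const 1 0)
    linear_combination this
  -- the cl identity holds unconditionally
  have hD2F1 : D2F (0, 1, τ) = 0 := hz τ
  have hM : fderiv ℝ D2F (0, 1, τ) e2 ≠ 0 := by rw [← hc]; exact hzz τ
  have hclfact : cl τ = -2 * ψt 0 1 τ
      - (1 - α) * deriv (fun z => deriv (fun z' => ψt 0 z' τ) z) 1
          * (ωt 0 1 τ / deriv (fun z => deriv (fun z' => ωt 0 z' τ) z) 1) := by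
    rw [hc, hcψ]
    have hΨ0 : ψt 0 1 τ = Ψ (0, 1, τ) := rfl
    have hF0 : ωt 0 1 τ = F (0, 1, τ) := rfl
    rw [hΨ0, hF0]
    rw [hD2F1, hmix] at hderiv0
    field_simp
    linear_combination hderiv0
  -- the pointwise equation at (0,1,τ)
  have hpt : deriv (fun s => ωt 0 1 s) τ
      = (cω τ - (1 - α) * deriv (fun z => ψt 0 z τ) 1) * ωt 0 1 τ := by
    have h0 := heq 0 1 τ le_rfl
    rw [hz1 τ] at h0
    linear_combination h0
  constructor
  · rintro ⟨h1, -⟩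
    refine ⟨?_, hclfact⟩
    rw [h1] at hpt
    have := mul_eq_zero.mp hpt.symm
    rcases this with h | h
    · linarith [sub_eq_zero.mp h]
    · exact absurd h (hnz τ)
  · rintro ⟨h1, -⟩
    refine ⟨?_, htriv⟩
    rw [hpt, h1]
    ring
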